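/- arXiv:0905.1340 — 2 statements merged into one kernel-verified Lean document; each statement's English description precedes it below -/
import Mathlib

section
/- For n ≥ 3 and a finite group G, the cardinality of G ≀ R_n satisfies |G ≀ R_n| = (2n-1)|G|·|G ≀ R_{n-1}| + |G ≀ R_{n-1}| - (n-1)^2 |G|^2 |G ≀ R_{n-2}|. -/
/-!
A `G`-labelled partial injection of `[n]` is a finset `D`, an embedding `D ↪ [n]` and labels
`D → G`, so `|G ≀ R_n| = R(n, n)`, where `R(m, n) = ∑ₖ C(m,k) n^(k) gᵏ` is the rook polynomial of
the `m × n` board evaluated at `g = |G|`. Deciding whether the last row holds a rook gives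
`R(m+1, n+1) = R(m, n+1) + (n+1) g R(m, n)`. Expanding `R(n, n)` by this and then by its
transpose, and `R(n-1, n-1)` by it once, the off-diagonal value `R(n-2, n-1)` cancels.
-/

open Finset Function

def rookPoly (m n g : ℕ) : ℕ := ∑ k ∈ range (m + 1), m.choose k * (n.descFactorial k * g ^ k)

theorem rookPoly_eq_sum_range_of_le {m n g N : ℕ} (h : m ≤ N) :
    rookPoly m n g = ∑ k ∈ range (N + 1), m.choose k * (n.descFactorial k * g ^ k) := by
  refine sum_subset (range_subset_range.2 (by omega)) fun k _ hk => ?_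
  rw [mem_range, not_lt] at hk
  rw [Nat.choose_eq_zero_of_lt (by omega), zero_mul]

theorem rookPoly_comm (m n g : ℕ) : rookPoly m n g = rookPoly n m g := by
  rw [rookPoly_eq_sum_range_of_le (m.le_add_right n),
    rookPoly_eq_sum_range_of_le (n.le_add_left m)]
  refine sum_congr rfl fun k _ => ?_
  rw [Nat.descFactorial_eq_factorial_mul_choose, Nat.descFactorial_eq_factorial_mul_choose]
  ring

theorem rookPoly_succ_succ (m n g : ℕ) :
    rookPoly (m + 1) (n + 1) g = rookPoly m (n + 1) g + (n + 1) * g * rookPoly m n g := by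
  rw [rookPoly, sum_range_succ', rookPoly_eq_sum_range_of_le (m.le_succ), rookPoly, mul_sum,
    sum_range_succ' _ (m + 1), add_right_comm, ← sum_add_distrib]
  simp only [Nat.choose_zero_right, Nat.descFactorial_zero, pow_zero]
  congr 1
  refine sum_congr rfl fun k _ => ?_
  rw [Nat.choose_succ_succ', Nat.succ_descFactorial_succ, pow_succ]
  ring

theorem rookPoly_succ_succ' (m n g : ℕ) :
    rookPoly (m + 1) (n + 1) g = rookPoly (m + 1) n g + (m + 1) * g * rookPoly m n g := by
  rw [rookPoly_comm, rookPoly_succ_succ, rookPoly_comm n, rookPoly_comm n]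

theorem rookPoly_diag_recursion (m g : ℕ) :
    rookPoly (m + 2) (m + 2) g + (m + 1) ^ 2 * g ^ 2 * rookPoly m m g =
      (2 * m + 3) * g * rookPoly (m + 1) (m + 1) g + rookPoly (m + 1) (m + 1) g := by
  rw [rookPoly_succ_succ (m + 1), rookPoly_succ_succ' m (m + 1), rookPoly_succ_succ m]
  ring

namespace PEquiv

variable {α β : Type*}

def domFinset [Fintype α] (σ : α ≃. β) : Finset α := {a | (σ a).isSome}

@[simp]
theorem mem_domFinset [Fintype α] {σ : α ≃. β} {a : α} : a ∈ σ.domFinset ↔ (σ a).isSome := by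
  simp [domFinset]

noncomputable def ofEmbedding [DecidableEq α] {D : Finset α} (e : D ↪ β) : α ≃. β where
  toFun a := if h : a ∈ D then some (e ⟨a, h⟩) else none
  invFun b := (partialInv e b).map Subtype.val
  inv a b := by
    simp only [Option.map_eq_some_iff, e.injective.isPartialInv _ _]
    by_cases h : a ∈ D <;> simp [h]

theorem ofEmbedding_apply [DecidableEq α] {D : Finset α} (e : D ↪ β) (a : α) :
    ofEmbedding e a = if h : a ∈ D then some (e ⟨a, h⟩) else none := rfl

noncomputable def domFinsetEqEquiv [Fintype α] [DecidableEq α] (D : Finset α) :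
    {σ : α ≃. β // σ.domFinset = D} ≃ (D ↪ β) where
  toFun σ :=
    { toFun a := (σ.1 a).get (mem_domFinset.1 (σ.2.symm ▸ a.2))
      inj' a b hab := Subtype.ext <| σ.1.inj (Option.get_mem _) <| by
        simp only at hab
        rw [hab]
        exact Option.get_mem _ }
  invFun e := ⟨ofEmbedding e, by ext a; by_cases h : a ∈ D <;> simp [ofEmbedding_apply, h]⟩
  left_inv σ := by
    refine Subtype.ext (PEquiv.ext fun a => ?_)
    by_cases h : a ∈ D
    · rw [ofEmbedding_apply, dif_pos h]
      exact Option.some_get _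
    · have : σ.1 a = none := by simpa [← σ.2] using h
      simp [ofEmbedding_apply, h, this]
  right_inv e := by
    ext a
    simp [ofEmbedding_apply]

theorem card_subtype_domFinset_eq [Fintype α] [Fintype β] (D : Finset α) :
    Nat.card {σ : α ≃. β // σ.domFinset = D} = (Fintype.card β).descFactorial #D := by
  classical
  rw [Nat.card_congr (domFinsetEqEquiv D), Nat.card_eq_fintype_card, Fintype.card_embedding_eq,
    Fintype.card_coe]

instance [Fintype α] [Finite β] : Finite (α ≃. β) := by
  classical
  have (D : Finset α) : Finite {σ : α ≃. β // σ.domFinset = D} :=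
    .of_equiv _ (domFinsetEqEquiv D).symm
  exact .of_equiv _ (Equiv.sigmaFiberEquiv domFinset)

theorem card_sigma_dom_fun_eq_rookPoly [Fintype α] [Fintype β] (G : Type*) [Fintype G] :
    Nat.card ((σ : α ≃. β) × ({a : α // (σ a).isSome} → G)) =
      rookPoly (Fintype.card α) (Fintype.card β) (Fintype.card G) := by
  classical
  have := Fintype.ofFinite (α ≃. β)
  calc Nat.card ((σ : α ≃. β) × ({a : α // (σ a).isSome} → G))
      = ∑ σ : α ≃. β, Fintype.card G ^ #σ.domFinset := by
        rw [Nat.card_sigma]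
        refine sum_congr rfl fun σ _ => ?_
        rw [Nat.card_fun, Nat.card_eq_fintype_card, Nat.card_eq_fintype_card, ← Fintype.card_coe]
        simp
    _ = ∑ D : Finset α, (Fintype.card β).descFactorial #D * Fintype.card G ^ #D := by
        rw [← sum_fiberwise univ domFinset]
        refine sum_congr rfl fun D _ => ?_
        rw [sum_congr rfl fun σ hσ => by rw [(mem_filter.1 hσ).2], sum_const, smul_eq_mul,
          ← card_subtype_domFinset_eq, Nat.card_eq_fintype_card, Fintype.card_subtype]
    _ = _ := by
        rw [rookPoly, ← powerset_univ,
          sum_powerset_apply_card fun k => (Fintype.card β).descFactorial k * Fintype.card G ^ k,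
          card_univ]
        simp only [smul_eq_mul]

end PEquiv

theorem rook_wreath_product_card_recursion_general
    (G : Type*) [Fintype G] (n : ℕ) (hn : 3 ≤ n) :
    Nat.card ((σ : Fin n ≃. Fin n) × ({a : Fin n // (σ a).isSome} → G)) +
        (n - 1) ^ 2 * Fintype.card G ^ 2 *
          Nat.card ((σ : Fin (n - 2) ≃. Fin (n - 2)) ×
            ({a : Fin (n - 2) // (σ a).isSome} → G)) =
      (2 * n - 1) * Fintype.card G *
          Nat.card ((σ : Fin (n - 1) ≃. Fin (n - 1)) ×
            ({a : Fin (n - 1) // (σ a).isSome} → G)) +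
        Nat.card ((σ : Fin (n - 1) ≃. Fin (n - 1)) ×
          ({a : Fin (n - 1) // (σ a).isSome} → G)) := by
  obtain ⟨m, rfl⟩ : ∃ m, n = m + 2 := ⟨n - 2, by omega⟩
  rw [show 2 * (m + 2) - 1 = 2 * m + 3 by omega]
  simp only [PEquiv.card_sigma_dom_fun_eq_rookPoly, Fintype.card_fin, Nat.add_sub_cancel,
    Nat.add_one_sub_one]
  exact rookPoly_diag_recursion m (Fintype.card G)

/-- For `n ≥ 3` and a finite group `G`, the cardinality of the rook wreath
product `G ≀ R_n` (modeled as pairs of an injective partial function on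
`{1,...,n}` and a `G`-labeling of its domain) satisfies
`|G ≀ R_n| = (2n-1)|G|·|G ≀ R_{n-1}| + |G ≀ R_{n-1}| - (n-1)²|G|²·|G ≀ R_{n-2}|`
(stated additively to avoid natural subtraction). -/
theorem rook_wreath_product_card_recursion
    (G : Type*) [Group G] [Fintype G] (n : ℕ) (hn : 3 ≤ n) :
    Nat.card ((σ : Fin n ≃. Fin n) × ({a : Fin n // (σ a).isSome} → G)) +
        (n - 1) ^ 2 * Fintype.card G ^ 2 *
          Nat.card ((σ : Fin (n - 2) ≃. Fin (n - 2)) ×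
            ({a : Fin (n - 2) // (σ a).isSome} → G)) =
      (2 * n - 1) * Fintype.card G *
          Nat.card ((σ : Fin (n - 1) ≃. Fin (n - 1)) ×
            ({a : Fin (n - 1) // (σ a).isSome} → G)) +
        Nat.card ((σ : Fin (n - 1) ≃. Fin (n - 1)) ×
          ({a : Fin (n - 1) // (σ a).isSome} → G)) :=
  rook_wreath_product_card_recursion_general G n hn
end

section
/- Let S be a finite inverse semigroup with D-classes D_0,...,D_n, let r_k be the number of idempotents in D_k, and let G_k be the maximal subgroup at a chosen idempotent e_k ∈ D_k. Then |S| = Σ_{k=0}^n r_k^2 · |G_k|. -/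
/-!
View `S` as a groupoid on its idempotents, with `x : x⁻¹x ⟶ xx⁻¹`; the `D`-class of `e` consists
of the arrows whose ends are isomorphic to `e`. Sorting these by their pair of ends, the fibre over
`(f, f')` is in bijection with the fibre over `(e, e)`, which is the maximal subgroup `G_e`: given
arrows `u : f' ⟶ e` and `v : f ⟶ e`, the bijection is `x ↦ v x u⁻¹`. Composition only needs
`(yx)⁻¹ = x⁻¹y⁻¹` for composable `x`, `y`, which holds without knowing that idempotents commute.
-/
open Finset

section

variable {S : Type*} [Semigroup S]

structure IsInverseSemigroup (inv : S → S) : Prop where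
  mul_inv_mul (x : S) : x * inv x * x = x
  inv_mul_inv (x : S) : inv x * x * inv x = inv x
  eq_inv (x y : S) : x * y * x = x → y * x * y = y → y = inv x

/-- `x` is an arrow `a ⟶ b` of the inductive groupoid of `S`. -/
def IsArrow (inv : S → S) (x a b : S) : Prop :=
  inv x * x = a ∧ x * inv x = b

def IdemIsomorphic (inv : S → S) (a b : S) : Prop :=
  ∃ x, IsArrow inv x a b

variable {inv : S → S} {a b c e x y : S}

namespace IsInverseSemigroup

variable (h : IsInverseSemigroup inv)
include h

theorem inv_inv (x : S) : inv (inv x) = x :=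
  (h.eq_inv (inv x) x (h.inv_mul_inv x) (h.mul_inv_mul x)).symm

theorem inv_eq_self_of_idem (he : e * e = e) : inv e = e :=
  (h.eq_inv e e (by rw [he, he]) (by rw [he, he])).symm

theorem inv_mul_self_of_idem (he : e * e = e) : inv e * e = e := by
  rw [h.inv_eq_self_of_idem he, he]

theorem mul_inv_idem (x : S) : x * inv x * (x * inv x) = x * inv x := by
  rw [← mul_assoc, h.mul_inv_mul]

theorem inv_mul_idem (x : S) : inv x * x * (inv x * x) = inv x * x := by
  rw [← mul_assoc, h.inv_mul_inv]

end IsInverseSemigroup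

namespace IsArrow

variable (h : IsInverseSemigroup inv)
include h

theorem mul_source (hx : IsArrow inv x a b) : x * a = x := by
  rw [← hx.1, ← mul_assoc, h.mul_inv_mul]

theorem target_mul (hx : IsArrow inv x a b) : b * x = x := by
  rw [← hx.2, h.mul_inv_mul]

theorem source_mul_inv (hx : IsArrow inv x a b) : a * inv x = inv x := by
  rw [← hx.1, h.inv_mul_inv]

theorem inv_mul_target (hx : IsArrow inv x a b) : inv x * b = inv x := by
  rw [← hx.2, ← mul_assoc, h.inv_mul_inv]

theorem reverse (hx : IsArrow inv x a b) : IsArrow inv (inv x) b a := by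
  rw [IsArrow, h.inv_inv]
  exact hx.symm

theorem mul (hy : IsArrow inv y b c) (hx : IsArrow inv x a b) : IsArrow inv (y * x) a c := by
  have hinv : inv (y * x) = inv x * inv y := by
    refine (h.eq_inv _ _ ?_ ?_).symm
    · calc y * x * (inv x * inv y) * (y * x) = y * (x * inv x) * ((inv y * y) * x) := by
            simp only [mul_assoc]
        _ = y * x := by rw [hx.2, hy.1, hy.mul_source h, hx.target_mul h]
    · calc inv x * inv y * (y * x) * (inv x * inv y)
            = inv x * (inv y * y) * ((x * inv x) * inv y) := by simp only [mul_assoc]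
        _ = inv x * inv y := by rw [hx.2, hy.1, hx.inv_mul_target h, hy.source_mul_inv h]
  constructor
  · calc inv (y * x) * (y * x) = inv x * (inv y * y) * x := by rw [hinv]; simp only [mul_assoc]
      _ = a := by rw [hy.1, hx.inv_mul_target h, hx.1]
  · calc y * x * inv (y * x) = y * (x * inv x) * inv y := by rw [hinv]; simp only [mul_assoc]
      _ = c := by rw [hx.2, hy.mul_source h, hy.2]

theorem conj_cancel {u v : S} (hx : IsArrow inv x a b) (hu : inv u * u = a)
    (hv : inv v * v = b) : inv v * (v * x * inv u) * u = x :=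
  calc inv v * (v * x * inv u) * u = (inv v * v) * x * (inv u * u) := by simp only [mul_assoc]
    _ = x := by rw [hu, hv, hx.target_mul h, hx.mul_source h]

end IsArrow

namespace IdemIsomorphic

variable (h : IsInverseSemigroup inv)
include h

theorem symm (hab : IdemIsomorphic inv a b) : IdemIsomorphic inv b a :=
  let ⟨x, hx⟩ := hab
  ⟨inv x, hx.reverse h⟩

theorem trans (hab : IdemIsomorphic inv a b) (hbc : IdemIsomorphic inv b c) :
    IdemIsomorphic inv a c :=
  let ⟨x, hx⟩ := hab
  let ⟨y, hy⟩ := hbc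
  ⟨y * x, hy.mul h hx⟩

end IdemIsomorphic

variable [Fintype S]

open scoped Classical in
noncomputable def dClass (inv : S → S) (e : S) : Finset S :=
  {s | IdemIsomorphic inv (inv s * s) e}

theorem mem_dClass {s : S} : s ∈ dClass inv e ↔ IdemIsomorphic inv (inv s * s) e := by
  simp [dClass]

namespace IsInverseSemigroup

variable (h : IsInverseSemigroup inv)
include h

theorem card_arrows_eq [DecidablePred fun x => IsArrow inv x a b] {a' b' : S}
    [DecidablePred fun x => IsArrow inv x a' b']
    (ha : IdemIsomorphic inv a a') (hb : IdemIsomorphic inv b b') :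
    #{x | IsArrow inv x a b} = #{x | IsArrow inv x a' b'} := by
  obtain ⟨u, hu⟩ := ha
  obtain ⟨v, hv⟩ := hb
  refine card_nbij' (fun x => v * x * inv u) (fun y => inv v * y * u) ?_ ?_ ?_ ?_ <;>
    intro x hx <;> simp only [coe_filter, mem_univ, true_and, Set.mem_ofPred_eq] at hx ⊢
  · exact (hv.mul h hx).mul h (hu.reverse h)
  · exact ((hv.reverse h).mul h hx).mul h hu
  · exact hx.conj_cancel h hu.1 hv.1
  · simpa only [h.inv_inv] using hx.conj_cancel h (hu.reverse h).1 (hv.reverse h).1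

theorem mem_dClass_of_idem {f : S} (hf : f * f = f) :
    f ∈ dClass inv e ↔ IdemIsomorphic inv f e := by
  rw [mem_dClass, h.inv_mul_self_of_idem hf]

theorem dClass_disjoint_or_eq (e f : S) :
    Disjoint (dClass inv e) (dClass inv f) ∨ dClass inv e = dClass inv f := by
  refine or_iff_not_imp_left.2 fun hne => ?_
  obtain ⟨s, hse, hsf⟩ := not_disjoint_iff.1 hne
  have hef : IdemIsomorphic inv e f := ((mem_dClass.1 hse).symm h).trans h (mem_dClass.1 hsf)
  ext t
  simp only [mem_dClass]
  exact ⟨fun hte => hte.trans h hef, fun htf => htf.trans h (hef.symm h)⟩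

open scoped Classical in
theorem card_dClass :
    #(dClass inv e) = #{f ∈ dClass inv e | f * f = f} ^ 2 * #{x | IsArrow inv x e e} := by
  set E := {f ∈ dClass inv e | f * f = f}
  have hmaps : Set.MapsTo (fun s => (s * inv s, inv s * s)) (dClass inv e)
      (E ×ˢ E : Finset (S × S)) := by
    intro s hs
    have hs' := mem_dClass.1 hs
    simp only [mem_coe, mem_product, mem_filter, E]
    refine ⟨⟨(h.mem_dClass_of_idem (h.mul_inv_idem s)).2 ?_, h.mul_inv_idem s⟩,
      ⟨(h.mem_dClass_of_idem (h.inv_mul_idem s)).2 hs', h.inv_mul_idem s⟩⟩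
    exact (IdemIsomorphic.symm h ⟨s, rfl, rfl⟩).trans h hs'
  rw [card_eq_sum_card_fiberwise hmaps, sq, ← card_product, ← smul_eq_mul, ← sum_const]
  refine sum_congr rfl fun ⟨f, f'⟩ hff' => ?_
  simp only [mem_product, mem_filter, E] at hff'
  obtain ⟨⟨hfD, hf⟩, hf'D, hf'⟩ := hff'
  calc #{s ∈ dClass inv e | (s * inv s, inv s * s) = (f, f')} = #{x | IsArrow inv x f' f} := by
        congr 1
        ext s
        simp only [mem_filter, mem_univ, true_and, Prod.mk.injEq]
        refine ⟨fun ⟨_, hsf, hsf'⟩ => ⟨hsf', hsf⟩, fun ⟨hsf', hsf⟩ => ⟨?_, hsf, hsf'⟩⟩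
        rw [mem_dClass, hsf']
        exact (h.mem_dClass_of_idem hf').1 hf'D
    _ = #{x | IsArrow inv x e e} :=
        h.card_arrows_eq ((h.mem_dClass_of_idem hf').1 hf'D) ((h.mem_dClass_of_idem hf).1 hfD)

end IsInverseSemigroup

end

theorem Fintype.card_eq_sum_card_of_cover {α ι : Type*} [Fintype α] [Fintype ι]
    (D : ι → Finset α) (hcover : ∀ a, ∃ i, a ∈ D i)
    (hdisj : Pairwise fun i j => Disjoint (D i) (D j)) :
    Fintype.card α = ∑ i, #(D i) := by
  classical
  rw [← card_univ, ← card_biUnion fun i _ j _ hij => hdisj hij]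
  congr 1
  ext a
  simpa using hcover a

open scoped Classical in
/-- Let `S` be a finite inverse semigroup with (pairwise distinct) `D`-classes
`D_0, ..., D_n` (where `s D t` iff the idempotents `s⁻¹s` and `t⁻¹t` are
isomorphic), let `r_k` be the number of idempotents in `D_k`, and let `G_k` be
the maximal subgroup at a chosen idempotent `e_k ∈ D_k`. Then
`|S| = ∑_{k=0}^{n} r_k² · |G_k|`. -/
theorem card_inverse_semigroup_eq_sum_over_D_classes
    (S : Type*) [Semigroup S] [Fintype S]
    (inv : S → S)
    (hinv : ∀ x : S, (x * inv x * x = x ∧ inv x * x * inv x = inv x) ∧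
      ∀ y : S, x * y * x = x ∧ y * x * y = y → y = inv x)
    (n : ℕ) (D : Fin (n + 1) → Finset S) (e : Fin (n + 1) → S)
    (he : ∀ k, e k * e k = e k ∧ e k ∈ D k)
    (hD : ∀ k, ∀ s : S, s ∈ D k ↔
      ∃ u : S, inv u * u = inv s * s ∧ u * inv u = inv (e k) * e k)
    (hcover : ∀ s : S, ∃ k, s ∈ D k)
    (hdistinct : ∀ k j, k ≠ j → D k ≠ D j) :
    Fintype.card S =
      ∑ k : Fin (n + 1),
        ((D k).filter fun x => x * x = x).card ^ 2 *
          (Finset.univ.filter fun x : S =>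
            inv x * x = e k ∧ x * inv x = e k).card := by
  have h : IsInverseSemigroup inv :=
    ⟨fun x => (hinv x).1.1, fun x => (hinv x).1.2, fun x y h₁ h₂ => (hinv x).2 y ⟨h₁, h₂⟩⟩
  have hD_eq (k) : D k = dClass inv (e k) := by
    ext s
    rw [hD, h.inv_mul_self_of_idem (he k).1, mem_dClass]
    rfl
  have hdisj : Pairwise fun i j => Disjoint (D i) (D j) := fun k j hkj => by
    simp only [hD_eq]
    exact (h.dClass_disjoint_or_eq (e k) (e j)).resolve_right fun heq =>
      hdistinct k j hkj (by rw [hD_eq, hD_eq, heq])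
  rw [Fintype.card_eq_sum_card_of_cover D hcover hdisj]
  refine sum_congr rfl fun k _ => ?_
  rw [hD_eq k]
  convert h.card_dClass using 4
  exact Iff.rfl
end
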